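/- arXiv:1807.06327 — 4 statements merged into one kernel-verified Lean document; each statement's English description precedes it below -/
import Mathlib

section
/- Let P be a strongly blocked lattice-free polytope in ℝ^d. Then the integer hull P_I = conv(P ∩ ℤ^d) belongs to L^d, i.e., P_I is an integral lattice-free polytope not properly contained in any integral lattice-free polytope. Furthermore, if P is not integral, then P_I does not belong to M^d, i.e., P_I is properly contained in some lattice-free set. -/
open scoped BigOperators

noncomputable section

/-- A point of `ℝ^d` is integral if all its coordinates are integers. -/
def IsIntegralPoint {d : ℕ} (x : Fin d → ℝ) : Prop := ∀ i, ∃ n : ℤ, x i = (n : ℝ)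

/-- The set `ℤ^d` of integral points of `ℝ^d`. -/
def latticePts (d : ℕ) : Set (Fin d → ℝ) := {x | IsIntegralPoint x}

/-- A set `K ⊆ ℝ^d` is lattice-free if it is closed, convex, `d`-dimensional (nonempty
interior) and its interior contains no integral point. -/
def IsLatticeFree {d : ℕ} (K : Set (Fin d → ℝ)) : Prop :=
  IsClosed K ∧ Convex ℝ K ∧ (interior K).Nonempty ∧ interior K ∩ latticePts d = ∅

/-- A set is maximal lattice-free if it is lattice-free and not properly contained in
another lattice-free set. -/
def IsMaxLatticeFree {d : ℕ} (K : Set (Fin d → ℝ)) : Prop :=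
  IsLatticeFree K ∧ ∀ K' : Set (Fin d → ℝ), IsLatticeFree K' → K ⊆ K' → K = K'

/-- A polytope is the convex hull of a finite set of points. -/
def IsPolytope {d : ℕ} (P : Set (Fin d → ℝ)) : Prop :=
  ∃ V : Finset (Fin d → ℝ), P = convexHull ℝ (V : Set (Fin d → ℝ))

/-- A polyhedron is a finite intersection of closed halfspaces. -/
def IsPolyhedron {d : ℕ} (P : Set (Fin d → ℝ)) : Prop :=
  ∃ (n : ℕ) (c : Fin n → (Fin d → ℝ)) (b : Fin n → ℝ),
    P = {x | ∀ j, ∑ i, c j i * x i ≤ b j}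

/-- The integer hull of a set: the convex hull of its integral points. -/
def intHull {d : ℕ} (K : Set (Fin d → ℝ)) : Set (Fin d → ℝ) :=
  convexHull ℝ (K ∩ latticePts d)

/-- A polytope is integral if it is the convex hull of its integral points. -/
def IsIntegralPolytope {d : ℕ} (P : Set (Fin d → ℝ)) : Prop :=
  IsPolytope P ∧ P = intHull P

/-- A facet of a `d`-dimensional closed convex set in `ℝ^d` : a nonempty exposed face of
dimension `d - 1`. -/
def IsFacet {d : ℕ} (P F : Set (Fin d → ℝ)) : Prop :=
  IsExposed ℝ P F ∧ F.Nonempty ∧ Module.finrank ℝ (vectorSpan ℝ F) + 1 = d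

/-- A facet is blocked if its relative interior contains an integral point. -/
def IsBlocked {d : ℕ} (F : Set (Fin d → ℝ)) : Prop :=
  ∃ x ∈ intrinsicInterior ℝ F, IsIntegralPoint x

/-- A facet `F` of a `d`-dimensional lattice-free polyhedron in `ℝ^d` is strongly blocked
if its integer hull is `(d-1)`-dimensional and the relative interior of the integer hull
contains an integral point. -/
def IsStronglyBlockedFacet {d : ℕ} (P F : Set (Fin d → ℝ)) : Prop :=
  IsFacet P F ∧ Module.finrank ℝ (vectorSpan ℝ (intHull F)) + 1 = d ∧
    ∃ x ∈ intrinsicInterior ℝ (intHull F), IsIntegralPoint x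

/-- A polyhedron is strongly blocked if all its facets are strongly blocked. -/
def IsStronglyBlocked {d : ℕ} (P : Set (Fin d → ℝ)) : Prop :=
  ∀ F, IsFacet P F → IsStronglyBlockedFacet P F

/-- Membership in the family `L^d` of weakly maximal integral lattice-free polytopes:
integral lattice-free polytopes not properly contained in another integral
lattice-free polytope. -/
def MemL {d : ℕ} (P : Set (Fin d → ℝ)) : Prop :=
  IsIntegralPolytope P ∧ IsLatticeFree P ∧
    ∀ Q : Set (Fin d → ℝ), IsIntegralPolytope Q → IsLatticeFree Q → P ⊆ Q → P = Q

/-- Membership in the family `M^d` of strongly maximal integral lattice-free polytopes: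
integral lattice-free polytopes not properly contained in another lattice-free set. -/
def MemM {d : ℕ} (P : Set (Fin d → ℝ)) : Prop :=
  IsIntegralPolytope P ∧ IsLatticeFree P ∧
    ∀ K : Set (Fin d → ℝ), IsLatticeFree K → P ⊆ K → P = K

/-- An affine transformation of `ℝ^d` is unimodular if it maps `ℤ^d` onto `ℤ^d`. -/
def IsUnimodular {d : ℕ} (A : (Fin d → ℝ) ≃ᵃ[ℝ] (Fin d → ℝ)) : Prop :=
  A '' latticePts d = latticePts d

/-- The relation on subsets of `ℝ^d` of coinciding up to an affine unimodular
transformation. -/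
def UnimodEquiv {d : ℕ} (P Q : Set (Fin d → ℝ)) : Prop :=
  ∃ A : (Fin d → ℝ) ≃ᵃ[ℝ] (Fin d → ℝ), IsUnimodular A ∧ Q = A '' P

/-- `κ(a) = 1/a₁ + ⋯ + 1/a_d`. -/
def kappa {d : ℕ} (a : Fin d → ℝ) : ℝ := ∑ i, (a i)⁻¹

/-- The axis-aligned simplex `T(a) = conv {0, a₁ e₁, …, a_d e_d}`. -/
def axisSimplex {d : ℕ} (a : Fin d → ℝ) : Set (Fin d → ℝ) :=
  convexHull ℝ (insert 0 (Set.range fun i => a i • (Pi.single i 1 : Fin d → ℝ)))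

/-- The map `φ` replacing the last component `t` by `t+1, t(t+1)`. -/
def phiMap {d : ℕ} (a : Fin (d + 1) → ℝ) : Fin (d + 2) → ℝ :=
  Fin.snoc (Fin.snoc (Fin.init a) (a (Fin.last d) + 1))
    (a (Fin.last d) * (a (Fin.last d) + 1))

/-- The map `ψ` replacing the last component `t` by
`t+3, t(t+1), (t+1)(t+3), (t+1)(t+3)`. -/
def psiMap {d : ℕ} (a : Fin (d + 1) → ℝ) : Fin (d + 4) → ℝ :=
  Fin.snoc (Fin.snoc (Fin.snoc (Fin.snoc (Fin.init a) (a (Fin.last d) + 3))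
    (a (Fin.last d) * (a (Fin.last d) + 1)))
    ((a (Fin.last d) + 1) * (a (Fin.last d) + 3)))
    ((a (Fin.last d) + 1) * (a (Fin.last d) + 3))

/-- The map `ξ` replacing the last component `t` by `(3/2)t, 3t`. -/
def xiMap {d : ℕ} (a : Fin (d + 1) → ℝ) : Fin (d + 2) → ℝ :=
  Fin.snoc (Fin.snoc (Fin.init a) (3 / 2 * a (Fin.last d))) (3 * a (Fin.last d))

/-- The composition `η = ξ ∘ ψ ∘ φ`. -/
def etaMap {d : ℕ} (a : Fin (d + 1) → ℝ) : Fin (d + 6) → ℝ :=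
  xiMap (psiMap (phiMap a))

/-- The set `A_d` of representations of `1` as a sum of `d` Egyptian fractions,
with components sorted in ascending order. -/
def EgyptSet (d : ℕ) : Set (Fin d → ℕ) :=
  {a | (∀ i, 0 < a i) ∧ Monotone a ∧ ∑ i, ((a i : ℝ))⁻¹ = 1}

end

/-!
Every point `z` outside a full-dimensional polytope `P` is cut off by a facet of `P`: take a
Hahn–Banach hyperplane supporting `P` and tilt it about its face, keeping `z` strictly on the
far side, until the face has dimension `d - 1`. If that facet `F` is strongly blocked, `F_I`
spans the hyperplane of `F` and has an integral point `y` in its relative interior, so `P_I`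
contains a piece of that hyperplane around `y`.

Applying this to points beyond two opposite sides of `P` shows that `P_I` does not lie in a
hyperplane, hence is full-dimensional and lattice-free. In particular `P_I` has points strictly
inside the halfspace of `F`, so `y` is an interior point of `conv (P_I ∪ {z})`: a lattice-free
convex set containing `P_I` has no integral point outside `P`, which makes `P_I` maximal among
integral lattice-free polytopes. Finally, `P` is lattice-free and contains `P_I`, so `P_I ∈ M^d`
forces `P = P_I`.
-/

open Module Set Filter Topology

theorem eventually_mem_of_mem_intrinsicInterior {E : Type*} [NormedAddCommGroup E]
    [NormedSpace ℝ E] {S : Set E} {y : E}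
    (hy : y ∈ intrinsicInterior ℝ S) : ∀ᶠ x in 𝓝 y, x ∈ affineSpan ℝ S → x ∈ S := by
  obtain ⟨y, hy, rfl⟩ := hy
  obtain ⟨u, hu, hsub⟩ := (mem_nhds_subtype _ _ _).1 (mem_interior_iff_mem_nhds.1 hy)
  filter_upwards [hu] with x hx hxS using hsub (a := ⟨x, hxS⟩) hx

section Hyperplanes

variable {E : Type*} [NormedAddCommGroup E] [NormedSpace ℝ E] [FiniteDimensional ℝ E]

theorem Module.Dual.eq_smul_of_ker_le {K M : Type*} [Field K] [AddCommGroup M] [Module K M]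
    {f g : Dual K M} (h : LinearMap.ker f ≤ LinearMap.ker g) : ∃ c : K, g = c • f := by
  have := mem_span_of_iInf_ker_le_ker (L := fun _ : Unit => f) (by simpa using h)
  rw [range_const, Submodule.mem_span_singleton] at this
  obtain ⟨c, hc⟩ := this
  exact ⟨c, hc.symm⟩

theorem Module.Dual.apply_lt_of_mem_interior {P : Set E} {g : Dual ℝ E} (hg : g ≠ 0) {G : ℝ}
    (hle : ∀ x ∈ P, g x ≤ G) {x : E} (hx : x ∈ interior P) : g x < G := by
  let g' := LinearMap.toContinuousLinearMap g
  have hopen : IsOpenMap g' :=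
    ContinuousLinearMap.isOpenMap_of_ne_zero g' (by simpa [g'] using hg)
  have hsub : g' '' P ⊆ Iic G := by
    rintro _ ⟨x, hx, rfl⟩
    exact hle x hx
  have : g' x ∈ interior (Iic G) :=
    interior_mono hsub (hopen.image_interior_subset P ⟨x, hx, rfl⟩)
  simpa [g'] using this

theorem IsCompact.exists_forall_apply_lt {P : Set E} (hP : IsCompact P) {f : Dual ℝ E}
    (hf : f ≠ 0) : ∃ z, ∀ x ∈ P, f x < f z := by
  obtain ⟨M, hM⟩ := (hP.bddAbove_image (f.continuous_of_finiteDimensional.continuousOn))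
  obtain ⟨v, hv⟩ : ∃ v, f v = 1 := by
    obtain ⟨w, hw⟩ : ∃ w, f w ≠ 0 := by
      by_contra! h
      exact hf (LinearMap.ext h)
    exact ⟨(f w)⁻¹ • w, by simp [hw]⟩
  refine ⟨(M + 1) • v, fun x hx => ?_⟩
  have := hM ⟨x, hx, rfl⟩
  simp only [map_smul, hv, smul_eq_mul, mul_one]
  linarith

theorem vectorSpan_le_ker_of_forall_eq {K M : Type*} [Field K] [AddCommGroup M] [Module K M]
    {S : Set M} {g : Dual K M} {G : K} (hS : ∀ x ∈ S, g x = G) :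
    vectorSpan K S ≤ LinearMap.ker g :=
  Submodule.span_le.2 <| by
    rintro _ ⟨a, ha, b, hb, rfl⟩
    simp [hS a ha, hS b hb]

theorem vectorSpan_eq_ker_of_forall_eq {S : Set E} {g : Dual ℝ E} {G : ℝ}
    (hS : ∀ x ∈ S, g x = G) (hg : g ≠ 0)
    (hrank : finrank ℝ (vectorSpan ℝ S) + 1 = finrank ℝ E) :
    vectorSpan ℝ S = LinearMap.ker g :=
  Submodule.eq_of_le_of_finrank_le (vectorSpan_le_ker_of_forall_eq hS)
    (by have := Module.Dual.finrank_ker_add_one_of_ne_zero hg; omega)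

theorem finrank_vectorSpan_add_one_le {S : Set E} {g : Dual ℝ E} {G : ℝ}
    (hS : ∀ x ∈ S, g x = G) (hg : g ≠ 0) :
    finrank ℝ (vectorSpan ℝ S) + 1 ≤ finrank ℝ E := by
  have := Submodule.finrank_mono (vectorSpan_le_ker_of_forall_eq hS)
  have := Module.Dual.finrank_ker_add_one_of_ne_zero hg
  omega

theorem mem_affineSpan_of_vectorSpan_eq_ker {K M : Type*} [Field K] [AddCommGroup M]
    [Module K M] {S : Set M} {g : Dual K M} (hS : vectorSpan K S = LinearMap.ker g)
    {p x : M} (hp : p ∈ S) (hx : g x = g p) : x ∈ affineSpan K S := by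
  rw [← AffineSubspace.vsub_right_mem_direction_iff_mem (mem_affineSpan K hp),
    direction_affineSpan, hS]
  simp [hx]

theorem eventually_mem_convexHull_insert {S : Set E} {g : Dual ℝ E} {G : ℝ} {y w : E}
    (hS : ∀ᶠ x in 𝓝 y, g x = G → x ∈ S) (hy : g y = G) (hw : G < g w) :
    ∀ᶠ x in 𝓝 y, G ≤ g x → x ∈ convexHull ℝ (insert w S) := by
  set t : E → ℝ := fun x => (g x - G) / (g w - G)
  set s : E → E := fun x => (1 - t x)⁻¹ • (x - t x • w)
  have ht : Continuous t :=
    (g.continuous_of_finiteDimensional.sub continuous_const).div_const _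
  have hty : t y = 0 := by simp [t, hy]
  have hs : Tendsto s (𝓝 y) (𝓝 y) := by
    have : ContinuousAt s y :=
      ((continuous_const.sub ht).continuousAt.inv₀ (by simp [hty])).smul
        (continuous_id.sub (ht.smul continuous_const)).continuousAt
    simpa [s, hty] using this.tendsto
  -- `x = (1 - t x) • s x + t x • w` with `s x` on the hyperplane, and `s x → y` as `x → y`
  filter_upwards [hs.eventually hS, ht.continuousAt.eventually (gt_mem_nhds (hty ▸ one_pos))]
    with x hsx htx hGx
  have ht0 : 0 ≤ t x := div_nonneg (sub_nonneg.2 hGx) (sub_pos.2 hw).le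
  have ht1 : 1 - t x ≠ 0 := by linarith
  have hx : (1 - t x) • s x + t x • w = x := by simp [s, smul_smul, mul_inv_cancel₀ ht1]
  have hgs : g (s x) = G := by
    have : t x * (g w - G) = g x - G := div_mul_cancel₀ _ (sub_pos.2 hw).ne'
    simp only [s, map_smul, map_sub, smul_eq_mul]
    field_simp
    linarith
  rw [← hx]
  exact convex_convexHull ℝ _ (subset_convexHull ℝ _ (mem_insert_of_mem _ (hsx hgs)))
    (subset_convexHull ℝ _ (mem_insert _ _)) (by linarith) ht0 (by ring)

theorem mem_interior_convexHull_insert_insert {S : Set E} {g : Dual ℝ E} {G : ℝ} {y z u : E}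
    (hS : ∀ᶠ x in 𝓝 y, g x = G → x ∈ S) (hy : g y = G) (hz : G < g z) (hu : g u < G) :
    y ∈ interior (convexHull ℝ (insert z (insert u S))) := by
  have hz' := eventually_mem_convexHull_insert hS hy hz
  have hu' := eventually_mem_convexHull_insert (g := -g) (G := -G)
    (by simpa only [LinearMap.neg_apply, neg_inj] using hS) (by simp [hy]) (by simpa using hu)
  rw [mem_interior_iff_mem_nhds]
  filter_upwards [hz', hu'] with x hxz hxu
  rcases le_total G (g x) with h | h
  · exact convexHull_mono (insert_subset_insert (subset_insert _ _)) (hxz h)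
  · exact convexHull_mono (subset_insert _ _) (hxu (by simpa using h))

theorem isExposed_inter_hyperplane {P : Set E} {g : Dual ℝ E} {G : ℝ}
    (hle : ∀ x ∈ P, g x ≤ G) (hne : (P ∩ {x | g x = G}).Nonempty) :
    IsExposed ℝ P (P ∩ {x | g x = G}) := fun _ => by
  obtain ⟨p, hpP, hpG⟩ := hne
  refine ⟨LinearMap.toContinuousLinearMap g, Set.ext fun x => ⟨fun ⟨hxP, hxG⟩ => ?_, ?_⟩⟩
  · exact ⟨hxP, fun y hy => (hle y hy).trans_eq hxG.symm⟩
  · rintro ⟨hxP, hxmax⟩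
    exact ⟨hxP, (hle x hxP).antisymm (hpG.symm.trans_le (hxmax p hpP))⟩

end Hyperplanes

theorem Finset.exists_nonneg_tilt_touching {ι : Type*} (V : Finset ι) (a b : ι → ℝ)
    (ha : ∀ v ∈ V, a v ≤ 0) (hb : ∃ v ∈ V, 0 < b v) :
    ∃ t : ℝ, 0 ≤ t ∧ (∀ v ∈ V, a v + t * b v ≤ 0) ∧ ∃ v ∈ V, 0 < b v ∧ a v + t * b v = 0 := by
  classical
  set T := V.filter fun v => 0 < b v
  have hT : T.Nonempty := by simpa [T, Finset.filter_nonempty_iff] using hb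
  set t := T.inf' hT fun v => -a v / b v
  have ht0 : 0 ≤ t := (Finset.le_inf'_iff _ _).2 fun v hv =>
    div_nonneg (neg_nonneg.2 (ha v (Finset.mem_filter.1 hv).1)) (Finset.mem_filter.1 hv).2.le
  obtain ⟨v₁, hv₁T, hv₁⟩ : ∃ v₁ ∈ T, t = -a v₁ / b v₁ := T.exists_mem_eq_inf' hT _
  obtain ⟨hv₁V, hbv₁⟩ := Finset.mem_filter.1 hv₁T
  refine ⟨t, ht0, fun v hv => ?_, v₁, hv₁V, hbv₁, ?_⟩
  · rcases le_or_gt (b v) 0 with hbv | hbv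
    · nlinarith [ha v hv]
    · have := T.inf'_le (fun v => -a v / b v) (Finset.mem_filter.2 ⟨hv, hbv⟩)
      rw [le_div_iff₀ hbv] at this
      linarith
  · rw [hv₁, div_mul_cancel₀ _ hbv₁.ne']
    ring

section Polytopes

variable {E : Type*} [NormedAddCommGroup E] [NormedSpace ℝ E] [FiniteDimensional ℝ E]
  {V : Finset E}

-- `h` is an axis about which a hyperplane containing `F` can be tilted towards a point of `V`
-- while `z` stays on its far side.
theorem exists_dual_tilt (hV : affineSpan ℝ (V : Set E) = ⊤) {F : Set E} {p : E} (z : E)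
    (hp : p ∈ F) (hF : finrank ℝ (vectorSpan ℝ F) + 1 < finrank ℝ E) :
    ∃ h : Dual ℝ E, (∀ x ∈ F, h x = h p) ∧ h z = h p ∧ ∃ v ∈ V, h p < h v := by
  set W := vectorSpan ℝ F ⊔ ℝ ∙ (z - p)
  have hW : finrank ℝ W < finrank ℝ E := by
    have : finrank ℝ (ℝ ∙ (z - p)) ≤ 1 := (finrank_span_le_card _).trans (by simp)
    have := Submodule.finrank_add_le_finrank_add_finrank (vectorSpan ℝ F) (ℝ ∙ (z - p))
    change finrank ℝ ↥(vectorSpan ℝ F ⊔ ℝ ∙ (z - p)) < _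
    omega
  obtain ⟨v, hvV, hv⟩ : ∃ v ∈ V, v - p ∉ W := by
    by_contra! h
    have : affineSpan ℝ (V : Set E) ≤ AffineSubspace.mk' p W :=
      affineSpan_le.2 fun v hv => (AffineSubspace.mem_mk').2 (h v hv)
    rw [hV, top_le_iff] at this
    have hWtop : W = ⊤ := by
      simpa using congrArg AffineSubspace.direction this
    rw [hWtop, finrank_top] at hW
    exact lt_irrefl _ hW
  obtain ⟨h₀, hh₀v, hh₀W⟩ := W.exists_dual_map_eq_bot_of_notMem hv inferInstance
  have hW0 : ∀ w ∈ W, h₀ w = 0 := fun w hw =>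
    (Submodule.mem_bot ℝ).1 (hh₀W ▸ Submodule.mem_map_of_mem hw)
  have hconst : ∀ x, x - p ∈ W → h₀ x = h₀ p := fun x hx => by
    simpa [sub_eq_zero] using hW0 _ hx
  refine ⟨h₀ (v - p) • h₀, fun x hx => ?_, ?_, v, hvV, ?_⟩
  · simp [hconst x (Submodule.mem_sup_left (vsub_mem_vectorSpan ℝ hx hp))]
  · simp [hconst z (Submodule.mem_sup_right (Submodule.mem_span_singleton_self _))]
  · have := mul_self_pos.2 hh₀v
    simp only [map_sub] at this
    simp only [LinearMap.smul_apply, smul_eq_mul, map_sub]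
    nlinarith

theorem exists_supporting_finrank_lt {P : Set E} (hPV : P = convexHull ℝ (V : Set E))
    (hV : affineSpan ℝ (V : Set E) = ⊤) {g : Dual ℝ E} {G : ℝ} {p z : E}
    (hle : ∀ x ∈ P, g x ≤ G) (hp : p ∈ P) (hpG : g p = G) (hz : G < g z)
    (hrank : finrank ℝ (vectorSpan ℝ (P ∩ {x | g x = G})) + 1 < finrank ℝ E) :
    ∃ (g' : Dual ℝ E) (G' : ℝ), (∀ x ∈ P, g' x ≤ G') ∧ (P ∩ {x | g' x = G'}).Nonempty ∧
      G' < g' z ∧ finrank ℝ (vectorSpan ℝ (P ∩ {x | g x = G})) <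
        finrank ℝ (vectorSpan ℝ (P ∩ {x | g' x = G'})) := by
  have hVP : (V : Set E) ⊆ P := hPV ▸ subset_convexHull ℝ _
  obtain ⟨h, hF, hzh, v, hvV, hv⟩ :=
    exists_dual_tilt hV z (F := P ∩ {x | g x = G}) ⟨hp, hpG⟩ hrank
  obtain ⟨t, ht0, htV, v₁, hv₁V, hv₁, hv₁t⟩ :=
    V.exists_nonneg_tilt_touching (fun v => g v - G) (fun v => h v - h p)
      (fun v hv => sub_nonpos.2 (hle v (hVP hv))) ⟨v, hvV, sub_pos.2 hv⟩
  set g' := g + t • h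
  set G' := G + t * h p
  have hFF' : P ∩ {x | g x = G} ⊆ P ∩ {x | g' x = G'} := fun x hx => by
    refine ⟨hx.1, ?_⟩
    change g x + t * h x = G + t * h p
    rw [show g x = G from hx.2, hF x hx]
  have hv₁F' : v₁ ∈ P ∩ {x | g' x = G'} := by
    refine ⟨hVP hv₁V, ?_⟩
    change g v₁ + t * h v₁ = G + t * h p
    linarith
  refine ⟨g', G', fun x hx => ?_, ⟨v₁, hv₁F'⟩, ?_, ?_⟩
  · rw [hPV] at hx
    refine convexHull_min (fun v hv => ?_) (convex_halfSpace_le g'.isLinear G') hx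
    change g v + t * h v ≤ G + t * h p
    linarith [htV v hv]
  · change G + t * h p < g z + t * h z
    rw [hzh]
    linarith
  · refine Submodule.finrank_lt_finrank_of_lt ((vectorSpan_mono ℝ hFF').lt_of_ne fun heq => ?_)
    have hmem : v₁ - p ∈ vectorSpan ℝ (P ∩ {x | g x = G}) :=
      heq ▸ vsub_mem_vectorSpan ℝ hv₁F' (hFF' ⟨hp, hpG⟩)
    have := vectorSpan_le_ker_of_forall_eq hF hmem
    simp only [LinearMap.mem_ker, map_sub] at this
    linarith

theorem exists_facet_hyperplane_separating {P : Set E} (hPV : P = convexHull ℝ (V : Set E))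
    (hV : affineSpan ℝ (V : Set E) = ⊤) {z : E} (hz : z ∉ P) :
    ∃ (g : Dual ℝ E) (G : ℝ), (∀ x ∈ P, g x ≤ G) ∧ G < g z ∧ (P ∩ {x | g x = G}).Nonempty ∧
      finrank ℝ (vectorSpan ℝ (P ∩ {x | g x = G})) + 1 = finrank ℝ E := by
  have hrank_le : ∀ (g : Dual ℝ E) (G : ℝ), (P ∩ {x | g x = G}).Nonempty → G < g z →
      finrank ℝ (vectorSpan ℝ (P ∩ {x | g x = G})) + 1 ≤ finrank ℝ E := by
    rintro g G ⟨p, -, hpG⟩ hz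
    refine finrank_vectorSpan_add_one_le (fun x hx => hx.2) ?_
    rintro rfl
    simp [← show (0 : Dual ℝ E) p = G from hpG] at hz
  suffices H : ∀ (n : ℕ) (g : Dual ℝ E) (G : ℝ), (∀ x ∈ P, g x ≤ G) →
      (P ∩ {x | g x = G}).Nonempty → G < g z →
      finrank ℝ E ≤ finrank ℝ (vectorSpan ℝ (P ∩ {x | g x = G})) + 1 + n →
      ∃ (g : Dual ℝ E) (G : ℝ), (∀ x ∈ P, g x ≤ G) ∧ G < g z ∧
        (P ∩ {x | g x = G}).Nonempty ∧
        finrank ℝ (vectorSpan ℝ (P ∩ {x | g x = G})) + 1 = finrank ℝ E by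
    have hPc : IsCompact P := hPV ▸ V.finite_toSet.isCompact_convexHull ℝ
    obtain ⟨f, u, hfP, hfz⟩ := geometric_hahn_banach_closed_point
      (hPV ▸ convex_convexHull ℝ _) hPc.isClosed hz
    have hPne : P.Nonempty := by
      rw [hPV, convexHull_nonempty_iff, Finset.coe_nonempty, Finset.nonempty_iff_ne_empty]
      rintro rfl
      simp at hV
    obtain ⟨p, hpP, hpmax⟩ := hPc.exists_isMaxOn hPne f.continuous.continuousOn
    exact H _ (f : Dual ℝ E) (f p) (fun x hx => hpmax hx) ⟨p, hpP, rfl⟩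
      ((hfP p hpP).trans hfz) le_add_self
  intro n
  induction n with
  | zero =>
    intro g G hle hne hz hn
    exact ⟨g, G, hle, hz, hne, le_antisymm (hrank_le g G hne hz) hn⟩
  | succ n ih =>
    intro g G hle hne hz hn
    rcases (hrank_le g G hne hz).eq_or_lt with heq | hlt
    · exact ⟨g, G, hle, hz, hne, heq⟩
    · obtain ⟨p, hpP, hpG⟩ := hne
      obtain ⟨g', G', hle', hne', hz', hrank⟩ :=
        exists_supporting_finrank_lt hPV hV hle hpP hpG hz hlt
      exact ih g' G' hle' hne' hz' (by omega)

end Polytopes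

section LatticeFree

variable {d : ℕ}

theorem latticePts_subset_span :
    latticePts d ⊆ Submodule.span ℤ (range (Pi.basisFun ℝ (Fin d))) := fun x hx =>
  ((Pi.basisFun ℝ (Fin d)).mem_span_iff_repr_mem ℤ x).2 fun i => by
    obtain ⟨n, hn⟩ := hx i
    exact ⟨n, by simp [hn]⟩

theorem Bornology.IsBounded.finite_inter_latticePts {K : Set (Fin d → ℝ)}
    (hK : Bornology.IsBounded K) :
    (K ∩ latticePts d).Finite :=
  (ZSpan.setFinite_inter _ hK).subset (inter_subset_inter_right _ latticePts_subset_span)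

theorem IsPolytope.convex {P : Set (Fin d → ℝ)} (hP : IsPolytope P) : Convex ℝ P := by
  obtain ⟨V, rfl⟩ := hP
  exact convex_convexHull ℝ _

theorem IsPolytope.isCompact {P : Set (Fin d → ℝ)} (hP : IsPolytope P) : IsCompact P := by
  obtain ⟨V, rfl⟩ := hP
  exact V.finite_toSet.isCompact_convexHull ℝ

theorem intHull_subset {K : Set (Fin d → ℝ)} (hK : Convex ℝ K) : intHull K ⊆ K :=
  convexHull_min inter_subset_left hK

theorem intHull_intHull (K : Set (Fin d → ℝ)) : intHull (intHull K) = intHull K :=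
  (convexHull_min inter_subset_left (convex_convexHull ℝ _)).antisymm
    (convexHull_mono (subset_inter (subset_convexHull ℝ _) inter_subset_right))

theorem isIntegralPolytope_intHull {K : Set (Fin d → ℝ)} (hK : Bornology.IsBounded K) :
    IsIntegralPolytope (intHull K) :=
  ⟨⟨hK.finite_inter_latticePts.toFinset, by simp [intHull]⟩, (intHull_intHull K).symm⟩

theorem IsLatticeFree.dim_pos {K : Set (Fin d → ℝ)} (hK : IsLatticeFree K) : 0 < d := by
  obtain ⟨-, -, ⟨x, hx⟩, hKL⟩ := hK
  refine Nat.pos_of_ne_zero fun hd => (eq_empty_iff_forall_notMem.1 hKL x) ⟨hx, ?_⟩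
  subst hd
  exact fun i => i.elim0

end LatticeFree

namespace IsStronglyBlocked

variable {d : ℕ} {P : Set (Fin d → ℝ)}

theorem exists_blocked_hyperplane_separating (hsb : IsStronglyBlocked P) (hpoly : IsPolytope P)
    (hP : (interior P).Nonempty) {z : Fin d → ℝ} (hz : z ∉ P) :
    ∃ (g : Dual ℝ (Fin d → ℝ)) (G : ℝ), g ≠ 0 ∧ (∀ x ∈ P, g x ≤ G) ∧ G < g z ∧
      LinearMap.ker g ≤ vectorSpan ℝ (intHull P) ∧
      ∃ y ∈ latticePts d, g y = G ∧ ∀ᶠ x in 𝓝 y, g x = G → x ∈ intHull P := by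
  obtain ⟨V, hPV⟩ := hpoly
  have hPconv : Convex ℝ P := hPV ▸ convex_convexHull ℝ _
  have hV : affineSpan ℝ (V : Set (Fin d → ℝ)) = ⊤ := by
    rw [← affineSpan_convexHull, ← hPV]
    exact hPconv.interior_nonempty_iff_affineSpan_eq_top.1 hP
  obtain ⟨g, G, hle, hgz, hne, hrank⟩ := exists_facet_hyperplane_separating hPV hV hz
  set F := P ∩ {x | g x = G}
  have hfacet : IsFacet P F := ⟨isExposed_inter_hyperplane hle hne, hne, by simpa using hrank⟩
  obtain ⟨-, hrankI, y, hy, hyL⟩ := hsb F hfacet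
  have hg : g ≠ 0 := by
    rintro rfl
    obtain ⟨p, -, hpG⟩ := hne
    simp [← show (0 : Dual ℝ (Fin d → ℝ)) p = G from hpG] at hgz
  have hFI : ∀ x ∈ intHull F, g x = G := fun x hx =>
    (intHull_subset (hPconv.inter (convex_hyperplane g.isLinear G)) hx).2
  have hspan : vectorSpan ℝ (intHull F) = LinearMap.ker g :=
    vectorSpan_eq_ker_of_forall_eq hFI hg (by simpa using hrankI)
  have hmono : intHull F ⊆ intHull P :=
    convexHull_mono (inter_subset_inter_left _ inter_subset_left)
  have hyF : y ∈ intHull F := intrinsicInterior_subset hy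
  refine ⟨g, G, hg, hle, hgz, hspan ▸ vectorSpan_mono ℝ hmono, y, hyL, hFI y hyF, ?_⟩
  filter_upwards [eventually_mem_of_mem_intrinsicInterior hy] with x hx hgx
  exact hmono (hx (mem_affineSpan_of_vectorSpan_eq_ker hspan hyF (by rw [hgx, hFI y hyF])))

theorem exists_mem_intHull_apply_ne (hsb : IsStronglyBlocked P) (hpoly : IsPolytope P)
    (hP : (interior P).Nonempty) {g : Dual ℝ (Fin d → ℝ)} (hg : g ≠ 0) {G : ℝ}
    (hle : ∀ x ∈ P, g x ≤ G) : ∃ q ∈ intHull P, g q ≠ G := by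
  by_contra! hPI
  obtain ⟨x₀, hx₀⟩ := hP
  obtain ⟨z, hz⟩ := hpoly.isCompact.exists_forall_apply_lt (neg_ne_zero.2 hg)
  obtain ⟨g', G', hg', hle', hgz, hker, y, -, hyG, hy⟩ :=
    hsb.exists_blocked_hyperplane_separating hpoly ⟨x₀, hx₀⟩ (z := z) fun hzP => by
      simpa using hz z hzP
  obtain ⟨c, rfl⟩ :=
    Module.Dual.eq_smul_of_ker_le (hker.trans (vectorSpan_le_ker_of_forall_eq hPI))
  have hyP : y ∈ intHull P := hy.self_of_nhds hyG
  have hGc : G = c * G' := by simpa [hyG] using (hPI y hyP).symm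
  have hx₀G : c * g' x₀ < c * G' := by
    simpa [hGc] using Module.Dual.apply_lt_of_mem_interior hg hle hx₀
  have hx₀G' := Module.Dual.apply_lt_of_mem_interior hg' hle' hx₀
  -- comparing at `x₀` gives `c > 0`, so `g' z < G'`, contradicting the choice of `g'`
  have hzy : c * g' z < c * G' := by simpa [hyG] using hz y (intHull_subset hpoly.convex hyP)
  nlinarith

theorem interior_intHull_nonempty (hsb : IsStronglyBlocked P) (hpoly : IsPolytope P)
    (hP : (interior P).Nonempty) (hd : 0 < d) : (interior (intHull P)).Nonempty := by
  obtain ⟨f, hf⟩ : ∃ f : Dual ℝ (Fin d → ℝ), f ≠ 0 :=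
    ⟨LinearMap.proj ⟨0, hd⟩, fun h => by simpa using LinearMap.congr_fun h (Pi.single ⟨0, hd⟩ 1)⟩
  obtain ⟨z, hz⟩ := hpoly.isCompact.exists_forall_apply_lt hf
  obtain ⟨g, G, hg, hle, -, hker, y, -, hyG, hy⟩ :=
    hsb.exists_blocked_hyperplane_separating hpoly hP (z := z) fun hzP => (hz z hzP).false
  obtain ⟨q, hq, hqG⟩ := hsb.exists_mem_intHull_apply_ne hpoly hP hg hle
  have hyP : y ∈ intHull P := hy.self_of_nhds hyG
  have htop : vectorSpan ℝ (intHull P) = ⊤ := by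
    have hqy : g (q - y) ≠ 0 := by simpa [hyG, sub_eq_zero] using hqG
    exact top_le_iff.1 ((LinearMap.span_singleton_sup_ker_eq_top g hqy).ge.trans
      (sup_le ((Submodule.span_singleton_le_iff_mem _ _).2 (vsub_mem_vectorSpan ℝ hq hyP)) hker))
  exact (convex_convexHull ℝ _).interior_nonempty_iff_affineSpan_eq_top.2
    ((AffineSubspace.affineSpan_eq_top_iff_vectorSpan_eq_top_of_nonempty _ _ _ ⟨y, hyP⟩).2
      htop)

theorem inter_latticePts_subset (hsb : IsStronglyBlocked P) (hpoly : IsPolytope P)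
    (hP : (interior P).Nonempty) {Q : Set (Fin d → ℝ)} (hQ : Convex ℝ Q)
    (hPQ : intHull P ⊆ Q) (hQL : interior Q ∩ latticePts d = ∅) :
    Q ∩ latticePts d ⊆ P := by
  rintro ζ ⟨hζQ, hζL⟩
  by_contra hζP
  obtain ⟨g, G, hg, hle, hgζ, -, y, hyL, hyG, hy⟩ :=
    hsb.exists_blocked_hyperplane_separating hpoly hP hζP
  obtain ⟨q, hq, hqG⟩ := hsb.exists_mem_intHull_apply_ne hpoly hP hg hle
  have hqG : g q < G := (hle q (intHull_subset hpoly.convex hq)).lt_of_ne hqG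
  have hyQ : y ∈ interior Q :=
    interior_mono (convexHull_min (insert_subset hζQ (insert_subset (hPQ hq) hPQ)) hQ)
      (mem_interior_convexHull_insert_insert hy hyG hgζ hqG)
  exact (eq_empty_iff_forall_notMem.1 hQL y) ⟨hyQ, hyL⟩

end IsStronglyBlocked

/-- if `P` is a strongly blocked lattice-free polytope, then `P_I ∈ L^d`;
moreover, if `P` is not integral then `P_I ∉ M^d`. -/
theorem statement4 {d : ℕ} (P : Set (Fin d → ℝ)) (hpoly : IsPolytope P)
    (hlf : IsLatticeFree P) (hsb : IsStronglyBlocked P) :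
    MemL (intHull P) ∧ (¬ IsIntegralPolytope P → ¬ MemM (intHull P)) := by
  have ⟨_, _, hPint, hPL⟩ := hlf
  have hPb : Bornology.IsBounded P := hpoly.isCompact.isBounded
  have hPIP : intHull P ⊆ P := intHull_subset hpoly.convex
  have hPI : IsIntegralPolytope (intHull P) := isIntegralPolytope_intHull hPb
  have hlfI : IsLatticeFree (intHull P) := by
    refine ⟨(hPb.finite_inter_latticePts.isCompact_convexHull ℝ).isClosed,
      convex_convexHull ℝ _, hsb.interior_intHull_nonempty hpoly hPint hlf.dim_pos, ?_⟩
    exact subset_empty_iff.1 (hPL ▸ inter_subset_inter_left _ (interior_mono hPIP))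
  refine ⟨⟨hPI, hlfI, fun Q hQ hQlf hPQ => hPQ.antisymm ?_⟩, fun hnot hM => hnot ⟨hpoly, ?_⟩⟩
  · exact hQ.2.subset.trans (convexHull_mono (subset_inter
      (hsb.inter_latticePts_subset hpoly hPint hQlf.2.1 hPQ hQlf.2.2.2) inter_subset_right))
  · exact (hM.2.2 P hlf hPIP).symm
end

section
/- For every a ∈ ℝ_{>0}^d, the axis-aligned simplex T(a) = conv{0, a_1 e_1, …, a_d e_d} is a maximal lattice-free set if and only if κ(a) = 1/a_1 + ⋯ + 1/a_d = 1. -/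
open scoped BigOperators

/-!
Write `a⁻¹ ⬝ᵥ x = ∑ xᵢ / aᵢ`, so that `T(a) = {x ≥ 0 | a⁻¹ ⬝ᵥ x ≤ 1}` with interior
`{x > 0 | a⁻¹ ⬝ᵥ x < 1}` and `κ(a) = a⁻¹ ⬝ᵥ 1`. An integral point of the interior is `≥ 1`,
so `T(a)` is lattice-free iff `κ(a) ≥ 1`. If `κ(a) > 1`, then `T(a)` lies strictly inside the
lattice-free simplex `T(κ(a) a)`. If `κ(a) = 1`, every facet carries an integral point in its
relative interior: `1 - eᵢ` on `xᵢ = 0` and `1` on `a⁻¹ ⬝ᵥ x = 1`. A point `y ∉ T(a)` violates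
some facet inequality, and moving the integral point `z` of that facet slightly away from `y`
lands in the interior of `T(a)`; so a convex set containing `T(a)` and `y` has `z` in its interior.
-/

open Filter Topology

lemma isLinearMap_dotProduct {ι : Type*} [Fintype ι] (v : ι → ℝ) : IsLinearMap ℝ (v ⬝ᵥ ·) :=
  ⟨dotProduct_add v, fun c x => dotProduct_smul c v x⟩

section TopologicalVectorSpace

variable {E : Type*} [AddCommGroup E] [Module ℝ E] [TopologicalSpace E]
  [IsTopologicalAddGroup E] [ContinuousSMul ℝ E]

lemma exists_pos_add_smul_mem_of_mem_interior {s : Set E} {x : E} (hx : x ∈ interior s)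
    (v : E) : ∃ t : ℝ, 0 < t ∧ x + t • v ∈ s := by
  have hcont : Tendsto (fun t : ℝ => x + t • v) (𝓝 0) (𝓝 x) := by
    simpa using (tendsto_const_nhds.add (tendsto_id.smul_const v) : Tendsto _ (𝓝 (0:ℝ)) _)
  have hnear : ∀ᶠ t in 𝓝[>] (0 : ℝ), x + t • v ∈ s :=
    (hcont.eventually (mem_interior_iff_mem_nhds.1 hx)).filter_mono nhdsWithin_le_nhds
  exact (eventually_mem_nhdsWithin.and hnear).exists

lemma Convex.mem_interior_of_add_smul_sub_mem_interior {K : Set E} (hK : Convex ℝ K)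
    {y z : E} (hy : y ∈ K) {s : ℝ} (hs : 0 < s) (hq : z + s • (z - y) ∈ interior K) :
    z ∈ interior K := by
  have hs' : 0 < 1 + s := by linarith
  convert hK.add_smul_sub_mem_interior hy hq
    ⟨inv_pos.2 hs', inv_le_one_of_one_le₀ (by linarith)⟩ using 1
  rw [show z + s • (z - y) - y = (1 + s) • (z - y) by module, smul_smul,
    inv_mul_cancel₀ hs'.ne', one_smul, add_sub_cancel]

end TopologicalVectorSpace

lemma eventually_pos_add_mul_sub {u w : ℝ} (hu : 0 ≤ u) (h : 0 < u ∨ w < u) :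
    ∀ᶠ s in 𝓝[>] (0 : ℝ), 0 < u + s * (u - w) := by
  rcases h with hu' | hwu
  · have hcont : Tendsto (fun s : ℝ => u + s * (u - w)) (𝓝 0) (𝓝 u) := by
      simpa using (tendsto_const_nhds.add (tendsto_id.mul_const (u - w)) : Tendsto _ (𝓝 (0:ℝ)) _)
    exact (hcont.eventually (lt_mem_nhds hu')).filter_mono nhdsWithin_le_nhds
  · exact eventually_nhdsWithin_of_forall fun s hs =>
      add_pos_of_nonneg_of_pos hu (mul_pos hs (sub_pos.2 hwu))

lemma one_le_of_isIntegralPoint_of_pos {d : ℕ} {z : Fin d → ℝ} (hz : IsIntegralPoint z)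
    (hpos : ∀ i, 0 < z i) : 1 ≤ z := fun i => by
  obtain ⟨n, hn⟩ := hz i
  have hn_pos : 0 < n := by exact_mod_cast hn ▸ hpos i
  rw [Pi.one_apply, hn]
  exact Int.cast_one_le_of_pos hn_pos

section AxisSimplex

variable {d : ℕ} {a : Fin d → ℝ}

lemma mem_axisSimplex (ha : ∀ i, 0 < a i) {x : Fin d → ℝ} :
    x ∈ axisSimplex a ↔ 0 ≤ x ∧ a⁻¹ ⬝ᵥ x ≤ 1 := by
  have hvertex : (fun i => a i • (Pi.single i 1 : Fin d → ℝ)) = fun i => Pi.single i (a i) := by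
    ext i : 1; rw [← Pi.single_smul', smul_eq_mul, mul_one]
  rw [axisSimplex, hvertex]
  constructor
  · refine fun hx => convexHull_min ?_
      ((convex_Ici 0).inter (convex_halfSpace_le (isLinearMap_dotProduct a⁻¹) 1)) hx
    rintro _ (rfl | ⟨i, rfl⟩)
    · simp
    · exact ⟨Pi.single_nonneg.2 (ha i).le, by simp [dotProduct_single, (ha i).ne']⟩
  · rintro ⟨hx0, hx1⟩
    have key := (convex_convexHull ℝ (insert 0 (Set.range fun i => Pi.single i (a i)))).sum_mem
      (t := Finset.univ)
      (w := fun o : Option (Fin d) => o.elim (1 - a⁻¹ ⬝ᵥ x) fun i => x i / a i)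
      (z := fun o => o.elim 0 fun i => Pi.single i (a i))
      (fun o _ => by cases o with
        | none => exact sub_nonneg.2 hx1
        | some i => exact div_nonneg (hx0 i) (ha i).le)
      (by simp [Fintype.sum_option, dotProduct, div_eq_inv_mul])
      (fun o _ => by cases o with
        | none => exact subset_convexHull ℝ _ (Set.mem_insert _ _)
        | some i => exact subset_convexHull ℝ _ (Set.mem_insert_of_mem _ ⟨i, rfl⟩))
    convert key using 1
    simp only [Fintype.sum_option, Option.elim_none, Option.elim_some, smul_zero, zero_add,
      ← Pi.single_smul', smul_eq_mul, div_mul_cancel₀ _ (ha _).ne']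
    exact (Finset.univ_sum_single x).symm

def openAxisSimplex (a : Fin d → ℝ) : Set (Fin d → ℝ) :=
  {x | (∀ i, 0 < x i) ∧ a⁻¹ ⬝ᵥ x < 1}

lemma isOpen_openAxisSimplex (a : Fin d → ℝ) : IsOpen (openAxisSimplex a) := by
  simp only [openAxisSimplex, Set.ofPred_and, Set.ofPred_forall]
  exact (isOpen_iInter_of_finite fun i => isOpen_lt continuous_const (continuous_apply i)).inter
    (isOpen_lt (continuous_const.dotProduct continuous_id) continuous_const)

lemma openAxisSimplex_subset_axisSimplex (ha : ∀ i, 0 < a i) :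
    openAxisSimplex a ⊆ axisSimplex a :=
  fun _ hx => (mem_axisSimplex ha).2 ⟨fun i => (hx.1 i).le, hx.2.le⟩

lemma interior_axisSimplex (ha : ∀ i, 0 < a i) :
    interior (axisSimplex a) = openAxisSimplex a := by
  refine subset_antisymm (fun x hx => ?_)
    (interior_maximal (openAxisSimplex_subset_axisSimplex ha) (isOpen_openAxisSimplex a))
  obtain ⟨s, hs, hxs⟩ := exists_pos_add_smul_mem_of_mem_interior hx (-1)
  obtain ⟨t, ht, hxt⟩ := exists_pos_add_smul_mem_of_mem_interior hx x
  have hx0 := ((mem_axisSimplex ha).1 (interior_subset hx)).1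
  rw [mem_axisSimplex ha] at hxs hxt
  refine ⟨fun i => ?_, ?_⟩
  · have := hxs.1 i
    simp only [Pi.zero_apply, Pi.add_apply, Pi.smul_apply, Pi.neg_apply, Pi.one_apply,
      smul_eq_mul] at this
    linarith
  · -- scaling `x` up by `1 + t` stays in the simplex, so `x` is off the facet `a⁻¹ ⬝ᵥ x = 1`
    have hscale : a⁻¹ ⬝ᵥ (x + t • x) = (1 + t) * a⁻¹ ⬝ᵥ x := by
      rw [dotProduct_add, dotProduct_smul, smul_eq_mul]; ring
    have hnonneg : 0 ≤ a⁻¹ ⬝ᵥ x :=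
      dotProduct_nonneg_of_nonneg (fun i => inv_nonneg.2 (ha i).le) hx0
    nlinarith [hxt.2]

lemma openAxisSimplex_nonempty (ha : ∀ i, 0 < a i) : (openAxisSimplex a).Nonempty := by
  have hd : (0 : ℝ) < d + 1 := by positivity
  have hself : a⁻¹ ⬝ᵥ a = d := by simp [dotProduct, fun i => (ha i).ne']
  refine ⟨(d + 1 : ℝ)⁻¹ • a, fun i => smul_pos (inv_pos.2 hd) (ha i), ?_⟩
  rw [dotProduct_smul, hself, smul_eq_mul, inv_mul_lt_one₀ hd]
  linarith

lemma kappa_eq_inv_dotProduct_one (a : Fin d → ℝ) : kappa a = a⁻¹ ⬝ᵥ 1 :=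
  (dotProduct_one a⁻¹).symm

lemma openAxisSimplex_inter_latticePts_eq_empty_iff (ha : ∀ i, 0 < a i) :
    openAxisSimplex a ∩ latticePts d = ∅ ↔ 1 ≤ kappa a := by
  rw [kappa_eq_inv_dotProduct_one, Set.eq_empty_iff_forall_notMem]
  constructor
  · refine fun h => not_lt.1 fun hk => h 1 ⟨⟨fun _ => one_pos, hk⟩, fun _ => ⟨1, by simp⟩⟩
  · rintro hk z ⟨⟨hpos, hz⟩, hint⟩
    have := dotProduct_le_dotProduct_of_nonneg_left (w := a⁻¹)
      (one_le_of_isIntegralPoint_of_pos hint hpos) (fun i => inv_nonneg.2 (ha i).le)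
    linarith

lemma isLatticeFree_axisSimplex (ha : ∀ i, 0 < a i) (hk : 1 ≤ kappa a) :
    IsLatticeFree (axisSimplex a) := by
  refine ⟨(Set.toFinite _).isClosed_convexHull ℝ, convex_convexHull ℝ _, ?_, ?_⟩ <;>
    rw [interior_axisSimplex ha]
  exacts [openAxisSimplex_nonempty ha, (openAxisSimplex_inter_latticePts_eq_empty_iff ha).2 hk]

lemma kappa_smul (c : ℝ) (a : Fin d → ℝ) : kappa (c • a) = c⁻¹ * kappa a := by
  simp [kappa, Finset.mul_sum, mul_comm]

lemma axisSimplex_ssubset_axisSimplex (ha : ∀ i, 0 < a i) {b : Fin d → ℝ} (hab : a < b) :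
    axisSimplex a ⊂ axisSimplex b := by
  have hb : ∀ i, 0 < b i := fun i => (ha i).trans_le (hab.le i)
  have hinv : b⁻¹ ≤ a⁻¹ := fun i => inv_anti₀ (ha i) (hab.le i)
  have hsubset : axisSimplex a ⊆ axisSimplex b := fun x hx => by
    rw [mem_axisSimplex ha] at hx
    exact (mem_axisSimplex hb).2
      ⟨hx.1, (dotProduct_le_dotProduct_of_nonneg_right hinv hx.1).trans hx.2⟩
  obtain ⟨i, hi⟩ := (Pi.lt_def.1 hab).2
  refine (Set.ssubset_iff_of_subset hsubset).2 ⟨Pi.single i (b i), ?_, ?_⟩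
  · refine (mem_axisSimplex hb).2 ⟨Pi.single_nonneg.2 (hb i).le, ?_⟩
    rw [dotProduct_single, Pi.inv_apply, inv_mul_cancel₀ (hb i).ne']
  · rw [mem_axisSimplex ha, dotProduct_single, Pi.inv_apply, inv_mul_le_one₀ (ha i)]
    exact fun h => hi.not_ge h.2

lemma kappa_eq_one_of_isMaxLatticeFree (ha : ∀ i, 0 < a i)
    (h : IsMaxLatticeFree (axisSimplex a)) : kappa a = 1 := by
  have hk : 1 ≤ kappa a := (openAxisSimplex_inter_latticePts_eq_empty_iff ha).1
    (interior_axisSimplex ha ▸ h.1.2.2.2)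
  refine hk.eq_or_lt.elim Eq.symm fun hk => ?_
  -- otherwise `T(a)` sits strictly inside the lattice-free simplex `T(κ(a) a)`
  have : Nonempty (Fin d) := Finset.univ_nonempty_iff.1
    (Finset.nonempty_of_sum_ne_zero (show kappa a ≠ 0 by linarith))
  have hlt : ∀ i, a i < (kappa a • a) i := fun i => by
    simpa using (lt_mul_iff_one_lt_left (ha i)).2 hk
  have hssub := axisSimplex_ssubset_axisSimplex ha
    (Pi.lt_def.2 ⟨fun i => (hlt i).le, Classical.arbitrary _, hlt _⟩)
  have hfree := isLatticeFree_axisSimplex (fun i => (ha i).trans (hlt i))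
    (by rw [kappa_smul, inv_mul_cancel₀ (by linarith)])
  exact absurd (h.2 _ hfree hssub.subset) hssub.ne

lemma eventually_add_smul_sub_mem_openAxisSimplex {y z : Fin d → ℝ}
    (hz : ∀ j, 0 ≤ z j ∧ (0 < z j ∨ y j < z j))
    (hform : a⁻¹ ⬝ᵥ z ≤ 1 ∧ (a⁻¹ ⬝ᵥ z < 1 ∨ a⁻¹ ⬝ᵥ z < a⁻¹ ⬝ᵥ y)) :
    ∀ᶠ s in 𝓝[>] (0 : ℝ), z + s • (z - y) ∈ openAxisSimplex a := by
  refine (eventually_all.2 fun j => ?_).and ?_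
  · simpa using eventually_pos_add_mul_sub (hz j).1 (hz j).2
  · have := eventually_pos_add_mul_sub (u := 1 - a⁻¹ ⬝ᵥ z) (w := 1 - a⁻¹ ⬝ᵥ y)
      (by linarith [hform.1]) (hform.2.imp (by intro; linarith) (by intro; linarith))
    filter_upwards [this] with s hs
    rw [dotProduct_add, dotProduct_smul, dotProduct_sub, smul_eq_mul]
    linarith

lemma exists_latticePt_eventually_mem_openAxisSimplex (ha : ∀ i, 0 < a i) (hk : kappa a = 1)
    {y : Fin d → ℝ} (hy : y ∉ axisSimplex a) :
    ∃ z ∈ latticePts d, ∀ᶠ s in 𝓝[>] (0 : ℝ), z + s • (z - y) ∈ openAxisSimplex a := by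
  rw [kappa_eq_inv_dotProduct_one] at hk
  rw [mem_axisSimplex ha, not_and_or, Pi.le_def] at hy
  push Not at hy
  rcases hy with ⟨i, hyi⟩ | hy
  -- `1 - eᵢ` lies in the relative interior of the facet `xᵢ = 0`
  · refine ⟨1 - Pi.single i 1, fun j => ⟨1 - (Pi.single i 1 : Fin d → ℤ) j, ?_⟩,
      eventually_add_smul_sub_mem_openAxisSimplex (fun j => ?_) ?_⟩
    · rcases eq_or_ne j i with rfl | h <;> simp_all
    · rcases eq_or_ne j i with rfl | h <;> simp_all
    · rw [dotProduct_sub, hk, dotProduct_single, mul_one, Pi.inv_apply]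
      have := inv_pos.2 (ha i)
      exact ⟨by linarith, Or.inl (by linarith)⟩
  -- `1` lies in the relative interior of the facet `a⁻¹ ⬝ᵥ x = 1`
  · refine ⟨1, fun j => ⟨1, by simp⟩,
      eventually_add_smul_sub_mem_openAxisSimplex (fun j => ⟨zero_le_one, Or.inl one_pos⟩) ?_⟩
    rw [hk]
    exact ⟨le_rfl, Or.inr hy⟩

lemma subset_axisSimplex_of_isLatticeFree (ha : ∀ i, 0 < a i) (hk : kappa a = 1)
    {K : Set (Fin d → ℝ)} (hK : IsLatticeFree K) (hsub : axisSimplex a ⊆ K) :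
    K ⊆ axisSimplex a := by
  intro y hy
  by_contra hy'
  obtain ⟨z, hz, hev⟩ := exists_latticePt_eventually_mem_openAxisSimplex ha hk hy'
  obtain ⟨s, hs, hq⟩ := (eventually_mem_nhdsWithin.and hev).exists
  have hzK : z ∈ interior K := hK.2.1.mem_interior_of_add_smul_sub_mem_interior hy hs
    (interior_mono hsub (interior_axisSimplex ha ▸ hq))
  exact Set.eq_empty_iff_forall_notMem.1 hK.2.2.2 z ⟨hzK, hz⟩

lemma isMaxLatticeFree_axisSimplex (ha : ∀ i, 0 < a i) (hk : kappa a = 1) :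
    IsMaxLatticeFree (axisSimplex a) :=
  ⟨isLatticeFree_axisSimplex ha hk.ge, fun _ hK hsub =>
    hsub.antisymm (subset_axisSimplex_of_isLatticeFree ha hk hK hsub)⟩

end AxisSimplex

theorem statement7_general {d : ℕ} (a : Fin d → ℝ) (ha : ∀ i, 0 < a i) :
    IsMaxLatticeFree (axisSimplex a) ↔ kappa a = 1 :=
  ⟨kappa_eq_one_of_isMaxLatticeFree ha, isMaxLatticeFree_axisSimplex ha⟩

/-- for `a ∈ ℝ_{>0}^d`, the simplex `T(a)` is maximal lattice-free iff
`κ(a) = 1`. -/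
theorem statement7 {d : ℕ} (hd : 0 < d) (a : Fin d → ℝ) (ha : ∀ i, 0 < a i) :
    IsMaxLatticeFree (axisSimplex a) ↔ kappa a = 1 :=
  statement7_general a ha
end

section
/- Let a, b ∈ ℝ_{>0}^d be such that T(b) = A(T(a)) for some affine unimodular transformation A ∈ Aff(ℤ^d), where T(c) = conv{0, c_1 e_1, …, c_d e_d}. Then b is a permutation of a, i.e., a and b coincide up to permutation of their components. -/
open scoped BigOperators

/-!
`A` maps the vertices `0, a₁e₁, …, a_de_d` of `T(a)` (its extreme points) bijectively onto those
of `T(b)`, and its linear part maps `ℤ^d` onto itself. So the edge vector `aᵢeᵢ` goes to an edge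
vector of `T(b)`, whose coordinate at some `k` is `±b_k`, and which is `aᵢ` times an integral
vector: `b_k` is a nonzero integer multiple of `aᵢ`. The indices `k` can be chosen injectively,
giving `aᵢ ≤ b_{σ i}` for a permutation `σ`; the same argument for `A⁻¹` gives `∑ b ≤ ∑ a`,
which forces `aᵢ = b_{σ i}`.
-/

open Set

section Convex

variable {ι E F : Type*} [AddCommGroup E] [Module ℝ E] [AddCommGroup F] [Module ℝ F]

theorem single_mem_extremePoints_stdSimplex [Fintype ι] [DecidableEq ι] (j : ι) :
    Pi.single j 1 ∈ (stdSimplex ℝ ι).extremePoints ℝ := by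
  refine mem_extremePoints_iff_left.2 ⟨single_mem_stdSimplex ℝ j, ?_⟩
  rintro x hx y hy ⟨s, t, hs, ht, hst, hxy⟩
  have hx_off : ∀ k ≠ j, x k = 0 := fun k hk => by
    have := congrFun hxy k
    simp only [Pi.add_apply, Pi.smul_apply, smul_eq_mul, Pi.single_eq_of_ne hk] at this
    nlinarith [hx.1 k, hy.1 k, mul_nonneg ht.le (hy.1 k)]
  have hx_on : x j = 1 := by
    rw [← hx.2, Finset.sum_eq_single j (fun k _ hk => hx_off k hk) (by simp)]
  ext k
  rcases eq_or_ne k j with rfl | hk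
  · simp [hx_on]
  · simp [hx_off k hk, Pi.single_eq_of_ne hk]

theorem LinearMap.image_mem_extremePoints_of_injOn {C : Set E} {x : E} (f : E →ₗ[ℝ] F)
    (hC : Convex ℝ C) (hf : InjOn f C) (hx : x ∈ C.extremePoints ℝ) :
    f x ∈ (f '' C).extremePoints ℝ := by
  refine mem_extremePoints_iff_left.2 ⟨mem_image_of_mem f hx.1, ?_⟩
  rintro _ ⟨y, hy, rfl⟩ _ ⟨z, hz, rfl⟩ ⟨s, t, hs, ht, hst, hyz⟩
  have hmem : s • y + t • z ∈ C := hC hy hz hs.le ht.le hst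
  have heq : s • y + t • z = x := hf hmem hx.1 (by simpa using hyz)
  rw [mem_extremePoints_iff_left.1 hx |>.2 y hy z hz ⟨s, t, hs, ht, hst, heq⟩]

theorem AffineIndependent.mem_extremePoints_convexHull [Fintype ι] {p : ι → E}
    (hp : AffineIndependent ℝ p) (j : ι) :
    p j ∈ (convexHull ℝ (range p)).extremePoints ℝ := by
  classical
  set L := Fintype.linearCombination ℝ p
  have hL : ∀ i, L (Pi.single i 1) = p i := fun i => by simp [L]
  have hhull : convexHull ℝ (range p) = L '' stdSimplex ℝ ι := by
    rw [← convexHull_rangle_single_eq_stdSimplex, LinearMap.image_convexHull, ← range_comp]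
    simp only [Function.comp_def, hL]
  have hinj : InjOn L (stdSimplex ℝ ι) := fun w hw v hv hwv => by
    rw [affineIndependent_iff_eq_of_fintype_affineCombination_eq] at hp
    refine hp w v hw.2 hv.2 ?_
    rw [Finset.affineCombination_eq_linear_combination _ _ _ hw.2,
      Finset.affineCombination_eq_linear_combination _ _ _ hv.2]
    simpa [L, Fintype.linearCombination_apply] using hwv
  rw [hhull, ← hL]
  exact L.image_mem_extremePoints_of_injOn (convex_stdSimplex ℝ ι) hinj
    (single_mem_extremePoints_stdSimplex j)

theorem AffineIndependent.extremePoints_convexHull [Fintype ι] {p : ι → E}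
    (hp : AffineIndependent ℝ p) : (convexHull ℝ (range p)).extremePoints ℝ = range p :=
  extremePoints_convexHull_subset.antisymm <| range_subset_iff.2 hp.mem_extremePoints_convexHull

theorem AffineMap.map_smul_sub_map_zero (f : E →ᵃ[ℝ] F) (t : ℝ) (x : E) :
    f (t • x) - f 0 = t • (f x - f 0) := by
  rw [← vsub_eq_sub, ← f.linearMap_vsub, ← vsub_eq_sub, ← f.linearMap_vsub, vsub_eq_sub,
    vsub_eq_sub, sub_zero, sub_zero, map_smul]

theorem Function.Injective.exists_perm_of_range_eq {α : Type*} {u v : ι → α}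
    (hu : Function.Injective u) (hv : Function.Injective v) (h : range u = range v) :
    ∃ σ : Equiv.Perm ι, ∀ i, u i = v (σ i) :=
  ⟨(Equiv.ofInjective u hu).trans ((Equiv.setCongr h).trans (Equiv.ofInjective v hv).symm),
    fun i => by simp [Equiv.apply_ofInjective_symm]⟩

end Convex

theorem Equiv.Perm.exists_succ_eq_or_eq {n : ℕ} (f : Equiv.Perm (Fin (n + 1))) :
    ∃ e : Equiv.Perm (Fin n), ∀ i, (e i).succ = f i.succ ∨ (e i).succ = f 0 := by
  rcases hf : Equiv.Perm.decomposeFin f with ⟨p, e⟩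
  have hfpe : f = Equiv.Perm.decomposeFin.symm (p, e) := by rw [← hf, Equiv.symm_apply_apply]
  refine ⟨e, fun i => ?_⟩
  rw [hfpe, Equiv.Perm.decomposeFin_symm_apply_succ, Equiv.Perm.decomposeFin_symm_apply_zero]
  by_cases hp : (e i).succ = p
  · exact Or.inr hp
  · exact Or.inl (Equiv.swap_apply_of_ne_of_ne (Fin.succ_ne_zero _) hp).symm

theorem le_of_abs_mul_intCast_eq {x y : ℝ} (hx : 0 ≤ x) (hy : 0 < y) {m : ℤ}
    (h : |x * m| = y) : x ≤ y := by
  have hm : m ≠ 0 := by rintro rfl; simp at h; linarith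
  have hm1 : (1 : ℝ) ≤ |(m : ℝ)| := by exact_mod_cast Int.one_le_abs hm
  rw [← h, abs_mul, abs_of_nonneg hx]
  nlinarith

section AxisSimplex

variable {d : ℕ}

def simplexVertex (a : Fin d → ℝ) : Fin (d + 1) → Fin d → ℝ :=
  Fin.cons 0 fun i => a i • Pi.single i 1

theorem simplexVertex_apply (a : Fin d → ℝ) (s : Fin (d + 1)) (k : Fin d) :
    simplexVertex a s k = if s = k.succ then a k else 0 := by
  induction s using Fin.cases with
  | zero => simp [simplexVertex, (Fin.succ_ne_zero k).symm]
  | succ i =>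
    rcases eq_or_ne k i with rfl | hki
    · simp [simplexVertex]
    · simp [simplexVertex, hki, hki.symm]

theorem convexHull_range_simplexVertex (a : Fin d → ℝ) :
    convexHull ℝ (range (simplexVertex a)) = axisSimplex a := by
  rw [simplexVertex, Fin.range_cons, axisSimplex]

theorem affineIndependent_simplexVertex {a : Fin d → ℝ} (ha : ∀ i, a i ≠ 0) :
    AffineIndependent ℝ (simplexVertex a) := by
  rw [affineIndependent_iff_linearIndependent_vsub ℝ _ 0,
    ← linearIndependent_equiv (finSuccAboveEquiv 0)]
  have hvsub : (fun s : {s // s ≠ 0} => simplexVertex a s -ᵥ simplexVertex a 0) ∘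
      finSuccAboveEquiv 0 = fun i => Pi.single i (a i) := by
    ext i : 1
    simp [finSuccAboveEquiv_apply, simplexVertex, ← Pi.single_smul']
  rw [hvsub]
  exact Pi.linearIndependent_single_of_ne_zero ha

theorem abs_simplexVertex_sub_apply (a : Fin d → ℝ) {s t : Fin (d + 1)} (hst : s ≠ t)
    {k : Fin d} (hk : k.succ = s ∨ k.succ = t) :
    |simplexVertex a s k - simplexVertex a t k| = |a k| := by
  rcases hk with rfl | rfl <;> simp [simplexVertex_apply, hst, hst.symm]

theorem exists_perm_map_simplexVertex {a b : Fin d → ℝ} (ha : ∀ i, a i ≠ 0) (hb : ∀ i, b i ≠ 0)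
    (A : (Fin d → ℝ) ≃ᵃ[ℝ] (Fin d → ℝ)) (h : axisSimplex b = A '' axisSimplex a) :
    ∃ f : Equiv.Perm (Fin (d + 1)), ∀ s, A (simplexVertex a s) = simplexVertex b (f s) := by
  have hAa := (affineIndependent_simplexVertex ha).map' A.toAffineMap A.injective
  have hb' := affineIndependent_simplexVertex hb
  refine hAa.injective.exists_perm_of_range_eq hb'.injective ?_
  rw [← hb'.extremePoints_convexHull, convexHull_range_simplexVertex, h,
    ← convexHull_range_simplexVertex, ← A.coe_toAffineMap, AffineMap.image_convexHull, ← range_comp]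
  exact hAa.extremePoints_convexHull.symm

end AxisSimplex

section Unimodular

variable {d : ℕ}

theorem IsIntegralPoint.sub {x y : Fin d → ℝ} (hx : IsIntegralPoint x) (hy : IsIntegralPoint y) :
    IsIntegralPoint (x - y) := fun i => by
  obtain ⟨m, hm⟩ := hx i
  obtain ⟨n, hn⟩ := hy i
  exact ⟨m - n, by simp [hm, hn]⟩

theorem isIntegralPoint_single (i : Fin d) : IsIntegralPoint (Pi.single i (1 : ℝ)) := fun k => by
  by_cases hk : k = i
  · exact ⟨1, by simp [hk]⟩
  · exact ⟨0, by simp [hk]⟩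

theorem isIntegralPoint_zero : IsIntegralPoint (0 : Fin d → ℝ) := fun _ => ⟨0, by simp⟩

namespace IsUnimodular

variable {A : (Fin d → ℝ) ≃ᵃ[ℝ] (Fin d → ℝ)}

theorem symm (hA : IsUnimodular A) : IsUnimodular A.symm := by
  unfold IsUnimodular
  nth_rw 1 [← hA]
  exact A.toEquiv.symm_image_image _

theorem isIntegralPoint_apply (hA : IsUnimodular A) {x : Fin d → ℝ} (hx : IsIntegralPoint x) :
    IsIntegralPoint (A x) := by
  have : A x ∈ A '' latticePts d := mem_image_of_mem A hx
  rwa [hA] at this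

end IsUnimodular

end Unimodular

theorem exists_perm_le_of_isUnimodular {d : ℕ} {a b : Fin d → ℝ} (ha : ∀ i, 0 < a i)
    (hb : ∀ i, 0 < b i) {A : (Fin d → ℝ) ≃ᵃ[ℝ] (Fin d → ℝ)} (hA : IsUnimodular A)
    (h : axisSimplex b = A '' axisSimplex a) : ∃ σ : Equiv.Perm (Fin d), ∀ i, a i ≤ b (σ i) := by
  obtain ⟨f, hf⟩ := exists_perm_map_simplexVertex (fun i => (ha i).ne') (fun i => (hb i).ne') A h
  obtain ⟨e, he⟩ := f.exists_succ_eq_or_eq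
  refine ⟨e, fun i => ?_⟩
  obtain ⟨m, hm⟩ := (hA.isIntegralPoint_apply (isIntegralPoint_single i)).sub
    (hA.isIntegralPoint_apply isIntegralPoint_zero) (e i)
  have hedge : A (simplexVertex a i.succ) - A (simplexVertex a 0) =
      a i • (A (Pi.single i 1) - A 0) := by
    simpa [simplexVertex] using A.toAffineMap.map_smul_sub_map_zero (a i) (Pi.single i 1)
  have hcoord : |a i * m| = b (e i) := by
    rw [← hm, ← smul_eq_mul, ← Pi.smul_apply, ← hedge, hf, hf, Pi.sub_apply,
      abs_simplexVertex_sub_apply b (f.injective.ne (Fin.succ_ne_zero i)) (he i), abs_of_pos (hb _)]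
  exact le_of_abs_mul_intCast_eq (ha i).le (hb _) hcoord

/-- if `T(b) = A (T(a))` for a unimodular affine transformation `A`, then
`a` and `b` coincide up to permutation of components. -/
theorem statement12 {d : ℕ} (a b : Fin d → ℝ) (ha : ∀ i, 0 < a i) (hb : ∀ i, 0 < b i)
    (A : (Fin d → ℝ) ≃ᵃ[ℝ] (Fin d → ℝ)) (hA : IsUnimodular A)
    (h : axisSimplex b = A '' axisSimplex a) :
    ∃ σ : Equiv.Perm (Fin d), ∀ i, b i = a (σ i) := by
  obtain ⟨σ, hσ⟩ := exists_perm_le_of_isUnimodular ha hb hA h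
  obtain ⟨τ, hτ⟩ := exists_perm_le_of_isUnimodular hb ha hA.symm (by simp [h, image_image])
  have hsum : ∑ i, b (σ i) ≤ ∑ i, a i := calc
    ∑ i, b (σ i) = ∑ i, b i := Equiv.sum_comp σ b
    _ ≤ ∑ i, a (τ i) := Finset.sum_le_sum fun i _ => hτ i
    _ = ∑ i, a i := Equiv.sum_comp τ a
  have heq : ∀ i, a i = b (σ i) :=
    fun i => (Finset.sum_eq_sum_iff_of_le fun i _ => hσ i).1
      (le_antisymm (Finset.sum_le_sum fun i _ => hσ i) hsum) i (Finset.mem_univ i)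
  exact ⟨σ.symm, fun i => by rw [heq, σ.apply_symm_apply]⟩
end

section
/- Every strongly blocked lattice-free polytope P in ℝ^d is a maximal lattice-free set. -/
open scoped BigOperators

/-!
Let `K ⊋ P` be lattice-free and `y ∈ K \ P`. Tilting a hyperplane that separates `y` from
`P = conv V` about its contact with `V` produces a facet `F` of `P` whose hyperplane still
separates `y` from `P`. Strong blockedness gives an integral point `z` in the relative interior
of `F_I ⊆ K`, and `F_I` spans the facet hyperplane. With `y` on one side of that hyperplane and a
vertex of `P` on the other, convexity of `K` puts `z` in the interior of `K`: a contradiction.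
-/

open Module Set Filter Topology

section LinearAlgebra

variable {𝕜 E : Type*} [Field 𝕜] [AddCommGroup E] [Module 𝕜 E]

theorem vectorSpan_le_ker_of_forall_eq_s13 {s : Set E} {f : Dual 𝕜 E} {c : 𝕜}
    (h : ∀ x ∈ s, f x = c) : vectorSpan 𝕜 s ≤ LinearMap.ker f := by
  rw [vectorSpan_def, Submodule.span_le]
  rintro _ ⟨x, hx, w, hw, rfl⟩
  simp [h x hx, h w hw]

theorem exists_ne_of_vectorSpan_eq_top {s : Set E} (hs : vectorSpan 𝕜 s = ⊤) {f : Dual 𝕜 E}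
    (hf : f ≠ 0) (c : 𝕜) : ∃ x ∈ s, f x ≠ c := by
  by_contra! h
  have := vectorSpan_le_ker_of_forall_eq_s13 h
  rw [hs, top_le_iff, LinearMap.ker_eq_top] at this
  exact hf this

theorem exists_dual_eq_on_insert_of_finrank_lt {s : Set E} (y : E)
    (hs : finrank 𝕜 (vectorSpan 𝕜 s) + 1 < finrank 𝕜 E) :
    ∃ g : Dual 𝕜 E, g ≠ 0 ∧ ∀ x ∈ insert y s, g x = g y := by
  have hlt : vectorSpan 𝕜 (insert y s) < ⊤ := by
    refine lt_top_iff_ne_top.2 fun htop => ?_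
    have := finrank_vectorSpan_insert_le_set 𝕜 s y
    rw [htop, finrank_top] at this
    omega
  obtain ⟨g, hg, hker⟩ := Submodule.exists_le_ker_of_lt_top _ hlt
  refine ⟨g, hg, fun x hx => ?_⟩
  have := hker (vsub_mem_vectorSpan 𝕜 hx (mem_insert y s))
  rwa [LinearMap.mem_ker, vsub_eq_sub, map_sub, sub_eq_zero] at this

variable [FiniteDimensional 𝕜 E]

theorem finrank_vectorSpan_add_one_le_s13 {s : Set E} {f : Dual 𝕜 E} {c : 𝕜} (hf : f ≠ 0)
    (h : ∀ x ∈ s, f x = c) : finrank 𝕜 (vectorSpan 𝕜 s) + 1 ≤ finrank 𝕜 E := by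
  rw [← f.finrank_ker_add_one_of_ne_zero hf]
  exact Nat.add_le_add_right (Submodule.finrank_mono (vectorSpan_le_ker_of_forall_eq_s13 h)) 1

theorem mem_affineSpan_of_finrank_vectorSpan_eq {s : Set E} {f : Dual 𝕜 E} {c : 𝕜}
    (hf : f ≠ 0) (h : ∀ x ∈ s, f x = c)
    (hdim : finrank 𝕜 (vectorSpan 𝕜 s) + 1 = finrank 𝕜 E) {z x : E} (hz : z ∈ s)
    (hx : f x = c) : x ∈ affineSpan 𝕜 s := by
  have hker : vectorSpan 𝕜 s = LinearMap.ker f :=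
    Submodule.eq_of_le_of_finrank_eq (vectorSpan_le_ker_of_forall_eq_s13 h)
      (by have := f.finrank_ker_add_one_of_ne_zero hf; omega)
  rw [← AffineSubspace.vsub_right_mem_direction_iff_mem (subset_affineSpan 𝕜 s hz),
    direction_affineSpan, hker, LinearMap.mem_ker, vsub_eq_sub, map_sub, hx, h z hz, sub_self]

end LinearAlgebra

section Tilting

variable {𝕜 E : Type*} [Field 𝕜] [LinearOrder 𝕜] [IsStrictOrderedRing 𝕜]
  [AddCommGroup E] [Module 𝕜 E]

/- Rotate the supporting hyperplane `f = M` of `V` about its intersection with the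
hyperplane `g = g y`, until it hits a new point of `V`; the first point hit minimises
`(M - f v) / (g v - g y)`. -/
theorem exists_tilt_of_supporting {V : Finset E} {f g : Dual 𝕜 E} {M : 𝕜} {y : E}
    (hle : ∀ v ∈ V, f v ≤ M) (hg : ∀ v ∈ V, f v = M → g v = g y)
    (hgV : ∃ v ∈ V, g y < g v) :
    ∃ (f' : Dual 𝕜 E) (M' : 𝕜), (∀ v ∈ V, f' v ≤ M') ∧ f' y - M' = f y - M ∧
      V.filter (f · = M) ⊂ V.filter (f' · = M') := by
  obtain ⟨v₁, hv₁, hgv₁⟩ := hgV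
  obtain ⟨v₀, hv₀, hmin⟩ := (V.filter (g y < g ·)).exists_min_image
    (fun v => (M - f v) / (g v - g y)) ⟨v₁, Finset.mem_filter.2 ⟨hv₁, hgv₁⟩⟩
  obtain ⟨hv₀V, hgv₀⟩ := Finset.mem_filter.1 hv₀
  set t := (M - f v₀) / (g v₀ - g y)
  have ht : 0 ≤ t := div_nonneg (sub_nonneg.2 (hle v₀ hv₀V)) (sub_pos.2 hgv₀).le
  have htv₀ : t * (g v₀ - g y) = M - f v₀ := div_mul_cancel₀ _ (sub_pos.2 hgv₀).ne'
  refine ⟨f + t • g, M + t * g y, fun v hv => ?_, by simp, ?_⟩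
  · have : t * (g v - g y) ≤ M - f v := by
      rcases lt_or_ge (g y) (g v) with hgv | hgv
      · exact (le_div_iff₀ (sub_pos.2 hgv)).1 (hmin v (Finset.mem_filter.2 ⟨hv, hgv⟩))
      · exact (mul_nonpos_of_nonneg_of_nonpos ht (sub_nonpos.2 hgv)).trans
          (sub_nonneg.2 (hle v hv))
    simp only [LinearMap.add_apply, LinearMap.smul_apply, smul_eq_mul]
    linarith
  · refine Finset.ssubset_iff_of_subset (fun v hv => ?_) |>.2 ⟨v₀, ?_, fun hv₀' => ?_⟩
    · obtain ⟨hvV, hfv⟩ := Finset.mem_filter.1 hv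
      simp [hvV, hfv, hg v hvV hfv]
    · simp only [Finset.mem_filter, LinearMap.add_apply, LinearMap.smul_apply, smul_eq_mul]
      exact ⟨hv₀V, by linarith⟩
    · obtain ⟨-, hfv₀⟩ := Finset.mem_filter.1 hv₀'
      exact hgv₀.ne' (hg v₀ hv₀V hfv₀)

variable [FiniteDimensional 𝕜 E]

theorem exists_facet_functional_of_supporting {V : Finset E} (hV : vectorSpan 𝕜 (V : Set E) = ⊤)
    (y : E) (f : Dual 𝕜 E) (M : 𝕜) (hle : ∀ v ∈ V, f v ≤ M)
    (hface : (V.filter (f · = M)).Nonempty) (hy : M < f y) :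
    ∃ (f' : Dual 𝕜 E) (M' : 𝕜), (∀ v ∈ V, f' v ≤ M') ∧ (V.filter (f' · = M')).Nonempty ∧
      M' < f' y ∧ finrank 𝕜 (vectorSpan 𝕜 (V.filter (f' · = M') : Set E)) + 1 = finrank 𝕜 E := by
  induction hn : V.card - (V.filter (f · = M)).card using Nat.strong_induction_on
    generalizing f M with
  | _ n ih =>
  by_cases hdim : finrank 𝕜 (vectorSpan 𝕜 (V.filter (f · = M) : Set E)) + 1 = finrank 𝕜 E
  · exact ⟨f, M, hle, hface, hy, hdim⟩
  have hf : f ≠ 0 := by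
    obtain ⟨s, hs⟩ := hface
    rintro rfl
    exact ((Finset.mem_filter.1 hs).2 ▸ hy).ne rfl
  obtain ⟨g, hg0, hg⟩ := exists_dual_eq_on_insert_of_finrank_lt y <| lt_of_le_of_ne
    (finrank_vectorSpan_add_one_le_s13 hf fun x hx => (Finset.mem_filter.1 hx).2) hdim
  have hgface : ∀ v ∈ V, f v = M → g v = g y := fun v hv hfv =>
    hg v (mem_insert_of_mem _ (Finset.mem_filter.2 ⟨hv, hfv⟩))
  obtain ⟨g, hgface, hgV⟩ : ∃ g : Dual 𝕜 E, (∀ v ∈ V, f v = M → g v = g y) ∧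
      ∃ v ∈ V, g y < g v := by
    obtain ⟨v, hv, hgv⟩ := exists_ne_of_vectorSpan_eq_top hV hg0 (g y)
    rcases hgv.lt_or_gt with hlt | hgt
    · exact ⟨-g, fun w hw hfw => by simp [hgface w hw hfw], v, hv, by simpa⟩
    · exact ⟨g, hgface, v, hv, hgt⟩
  obtain ⟨f', M', hle', hy', hsub⟩ := exists_tilt_of_supporting hle hgface hgV
  have := Finset.card_lt_card hsub
  have := Finset.card_le_card (Finset.filter_subset (f' · = M') V)
  exact ih _ (by omega) f' M' hle' (hface.mono hsub.subset) (by linarith) rfl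

end Tilting

theorem exists_facet_functional_of_notMem_convexHull {E : Type*} [NormedAddCommGroup E]
    [NormedSpace ℝ E] [FiniteDimensional ℝ E] {V : Finset E} (hVne : V.Nonempty)
    (hV : vectorSpan ℝ (V : Set E) = ⊤) {y : E} (hy : y ∉ convexHull ℝ (V : Set E)) :
    ∃ (f : Dual ℝ E) (M : ℝ), (∀ v ∈ V, f v ≤ M) ∧ (V.filter (f · = M)).Nonempty ∧
      M < f y ∧ finrank ℝ (vectorSpan ℝ (V.filter (f · = M) : Set E)) + 1 = finrank ℝ E := by
  obtain ⟨ℓ, u, hℓ, hu⟩ := geometric_hahn_banach_closed_point (convex_convexHull ℝ _)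
    (V.finite_toSet.isCompact_convexHull (𝕜 := ℝ)).isClosed hy
  obtain ⟨v₀, hv₀, hmax⟩ := V.exists_mem_eq_sup' hVne ℓ
  refine exists_facet_functional_of_supporting hV y (ℓ : Dual ℝ E) (V.sup' hVne ℓ)
    (fun v hv => V.le_sup' ℓ hv) ⟨v₀, Finset.mem_filter.2 ⟨hv₀, hmax.symm⟩⟩ ?_
  have := hℓ v₀ (subset_convexHull ℝ _ hv₀)
  simp only [ContinuousLinearMap.coe_coe]
  linarith

theorem eventually_mem_of_mem_intrinsicInterior_s13 {𝕜 E : Type*} [Ring 𝕜] [AddCommGroup E]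
    [Module 𝕜 E] [TopologicalSpace E] {s : Set E} {z : E}
    (hz : z ∈ intrinsicInterior 𝕜 s) : ∀ᶠ x in 𝓝 z, x ∈ affineSpan 𝕜 s → x ∈ s := by
  obtain ⟨z, hz, rfl⟩ := hz
  obtain ⟨t, ht, hts⟩ := mem_nhds_subtype _ _ _ |>.1 (mem_interior_iff_mem_nhds.1 hz)
  filter_upwards [ht] with x hx hxs
  exact hts (show ⟨x, hxs⟩ ∈ Subtype.val ⁻¹' t from hx)

section Interior

variable {E : Type*} [AddCommGroup E] [Module ℝ E] [TopologicalSpace E]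
  [IsTopologicalAddGroup E] [ContinuousSMul ℝ E]

/- Every `w` near `z` with `f w ≥ M` lies on the segment from `p` to a point of the
hyperplane near `z`. -/
theorem Convex.eventually_mem_of_le {C : Set E} (hC : Convex ℝ C) {f : StrongDual ℝ E}
    {M : ℝ} {z p : E} (hz : f z = M) (hp : p ∈ C) (hfp : M < f p)
    (hflat : ∀ᶠ x in 𝓝 z, f x = M → x ∈ C) : ∀ᶠ w in 𝓝 z, M ≤ f w → w ∈ C := by
  set θ : E → ℝ := fun w => (f w - M) / (f p - M)
  set π : E → E := fun w => (1 - θ w)⁻¹ • (w - θ w • p)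
  have hθz : θ z = 0 := by simp [θ, hz]
  have hπ : ContinuousAt π z := by
    have : 1 - θ z ≠ 0 := by simp [hθz]
    fun_prop (disch := exact this)
  have hπz : π z = z := by simp [π, hθz]
  have hθ1 : ∀ᶠ w in 𝓝 z, θ w < 1 :=
    (show Continuous θ by fun_prop).continuousAt.eventually_lt continuousAt_const (by simp [hθz])
  have hπC : ∀ᶠ w in 𝓝 z, f (π w) = M → π w ∈ C := hπ.eventually (hπz ▸ hflat)
  filter_upwards [hθ1, hπC] with w hw1 hwC hMw
  have hθ0 : 0 ≤ θ w := div_nonneg (sub_nonneg.2 hMw) (sub_pos.2 hfp).le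
  have hne : 1 - θ w ≠ 0 := (sub_pos.2 hw1).ne'
  have hfπ : f (π w) = M := by
    have hθp : θ w * (f p - M) = f w - M := div_mul_cancel₀ _ (sub_pos.2 hfp).ne'
    have : f w - θ w * f p = (1 - θ w) * M := by
      generalize θ w = t at hθp
      linear_combination -hθp
    simp only [π, map_smul, map_sub, smul_eq_mul, this, inv_mul_cancel_left₀ hne]
  have hw : w = (1 - θ w) • π w + θ w • p := by
    simp only [π, smul_smul, mul_inv_cancel₀ hne, one_smul, sub_add_cancel]
  rw [hw]
  exact hC (hwC hfπ) hp (by linarith) hθ0 (by ring)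

theorem Convex.mem_interior_of_eventually_mem_hyperplane {C : Set E} (hC : Convex ℝ C)
    {f : StrongDual ℝ E} {M : ℝ} {z p q : E} (hz : f z = M) (hp : p ∈ C) (hfp : M < f p)
    (hq : q ∈ C) (hfq : f q < M) (hflat : ∀ᶠ x in 𝓝 z, f x = M → x ∈ C) :
    z ∈ interior C := by
  have hup := hC.eventually_mem_of_le hz hp hfp hflat
  have hdown := hC.eventually_mem_of_le (f := -f) (M := -M) (by simp [hz]) hq (by simpa)
    (hflat.mono fun x hx hfx => hx (by simpa using hfx))
  rw [mem_interior_iff_mem_nhds]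
  filter_upwards [hup, hdown] with w hwup hwdown
  rcases le_total M (f w) with h | h
  exacts [hwup h, hwdown (by simpa using h)]

end Interior

theorem isFacet_convexHull_inter_hyperplane {d : ℕ} {V : Finset (Fin d → ℝ)}
    {f : Dual ℝ (Fin d → ℝ)} {M : ℝ} (hf : f ≠ 0) (hle : ∀ v ∈ V, f v ≤ M)
    (hface : (V.filter (f · = M)).Nonempty)
    (hdim : finrank ℝ (vectorSpan ℝ (V.filter (f · = M) : Set (Fin d → ℝ))) + 1 = d) :
    IsFacet (convexHull ℝ (V : Set (Fin d → ℝ))) (convexHull ℝ ↑V ∩ {x | f x = M}) := by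
  have hP : ∀ x ∈ convexHull ℝ (V : Set (Fin d → ℝ)), f x ≤ M :=
    fun x hx => convexHull_min hle (convex_halfSpace_le f.isLinear M) hx
  have hsub : (V.filter (f · = M) : Set (Fin d → ℝ)) ⊆ convexHull ℝ ↑V ∩ {x | f x = M} :=
    fun v hv => ⟨subset_convexHull ℝ _ (Finset.mem_filter.1 hv).1, (Finset.mem_filter.1 hv).2⟩
  obtain ⟨s, hs⟩ := hface
  refine ⟨fun _ => ⟨LinearMap.toContinuousLinearMap f, ?_⟩, ⟨s, hsub hs⟩, le_antisymm ?_ ?_⟩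
  · ext x
    simp only [mem_inter_iff, mem_ofPred_eq, LinearMap.coe_toContinuousLinearMap']
    refine and_congr_right fun hx => ⟨fun hfx y hy => hfx ▸ hP y hy, fun hmax => ?_⟩
    exact (hP x hx).antisymm ((Finset.mem_filter.1 hs).2 ▸ hmax s (hsub hs).1)
  · simpa [finrank_fin_fun] using finrank_vectorSpan_add_one_le_s13 hf fun x hx => hx.2
  · exact hdim.ge.trans <|
      Nat.add_le_add_right (Submodule.finrank_mono (vectorSpan_mono ℝ hsub)) 1

/-- every strongly blocked lattice-free polytope is maximal lattice-free. -/
theorem statement13 {d : ℕ} (P : Set (Fin d → ℝ)) (hpoly : IsPolytope P)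
    (hlf : IsLatticeFree P) (hsb : IsStronglyBlocked P) :
    IsMaxLatticeFree P := by
  refine ⟨hlf, fun K hK hPK => by_contra fun hne => ?_⟩
  obtain ⟨y, hyK, hyP⟩ := exists_of_ssubset (hPK.ssubset_of_ne hne)
  obtain ⟨V, rfl⟩ := hpoly
  obtain ⟨-, hPconv, hPint, -⟩ := hlf
  have hV : vectorSpan ℝ (V : Set (Fin d → ℝ)) = ⊤ := by
    rw [← direction_affineSpan, ← affineSpan_convexHull,
      hPconv.interior_nonempty_iff_affineSpan_eq_top.1 hPint, AffineSubspace.direction_top]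
  have hVne : V.Nonempty := by
    simpa using hPint.mono interior_subset
  obtain ⟨f, M, hle, hface, hy, hdim⟩ := exists_facet_functional_of_notMem_convexHull hVne hV hyP
  have hf : f ≠ 0 := by
    obtain ⟨s, hs⟩ := hface
    rintro rfl
    exact ((Finset.mem_filter.1 hs).2 ▸ hy).ne rfl
  set F := convexHull ℝ ↑V ∩ {x | f x = M}
  obtain ⟨-, hdimI, z, hz, hzℤ⟩ :=
    hsb F (isFacet_convexHull_inter_hyperplane hf hle hface (hdim.trans (finrank_fin_fun ℝ)))
  have hIF : intHull F ⊆ F := convexHull_min inter_subset_left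
    (hPconv.inter (convex_hyperplane f.isLinear M))
  have hflat : ∀ᶠ x in 𝓝 z, f x = M → x ∈ K :=
    (eventually_mem_of_mem_intrinsicInterior_s13 hz).mono fun x hx hfx => hPK (hIF (hx
      (mem_affineSpan_of_finrank_vectorSpan_eq hf (fun w hw => (hIF hw).2)
        (hdimI.trans (finrank_fin_fun ℝ).symm) (intrinsicInterior_subset hz) hfx))).1
  obtain ⟨q, hqV, hqM⟩ := exists_ne_of_vectorSpan_eq_top hV hf M
  have hzK : z ∈ interior K := hK.2.1.mem_interior_of_eventually_mem_hyperplane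
    (f := LinearMap.toContinuousLinearMap f) (hIF (intrinsicInterior_subset hz)).2 hyK hy
    (hPK (subset_convexHull ℝ _ hqV)) ((hle q hqV).lt_of_ne hqM) hflat
  exact hK.2.2.2.subset ⟨hzK, hzℤ⟩
end
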